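/- Let n₁ + n₂ + … + n_J = n be positive integers. Then there exist partitions λ⁽ʲ⁾ ⊢ nⱼ such that the horizontal sum λ := λ⁽¹⁾ +_H λ⁽²⁾ +_H … +_H λ⁽ᴶ⁾ is a partition of n with at least √(2n) − 10J distinct row lengths. -/

import Mathlib

/-- Sort the parts of a partition in weakly decreasing order. -/
def sortD (s : Multiset ℕ) : List ℕ := (s.sort (· ≤ ·)).reverse

/-- Pad a list with zeros up to length `n`. -/
def padZero (l : List ℕ) (n : ℕ) : List ℕ := l ++ List.replicate (n - l.length) 0

/-- The horizontal sum of two partitions (given as multisets of parts):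
add the parts coordinatewise after sorting in decreasing order. -/
def hSum (s t : Multiset ℕ) : Multiset ℕ :=
  ((List.zipWith (· + ·) (padZero (sortD s) (max (Multiset.card s) (Multiset.card t)))
      (padZero (sortD t) (max (Multiset.card s) (Multiset.card t))) : List ℕ) :
    Multiset ℕ).filter (0 < ·)

lemma sortD_coe (L : List ℕ) (h : L.Pairwise (· ≥ ·)) : sortD (↑L) = L := by
  unfold sortD
  have h1 : (Multiset.sort (↑L : Multiset ℕ) (· ≤ ·)) = L.reverse := by
    refine (fun hp h1 h2 => List.Perm.eq_of_pairwise' (r := (· ≤ ·)) h1 h2 hp) ?_ ?_ ?_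
    · have := Multiset.sort_eq (α := ℕ) (↑L) (· ≤ ·)
      exact (Multiset.coe_eq_coe.mp this).trans (List.reverse_perm L).symm
    · exact Multiset.pairwise_sort _ _
    · exact List.pairwise_reverse.mpr h
  rw [h1, List.reverse_reverse]

lemma padZero_length (l : List ℕ) (n : ℕ) (h : l.length ≤ n) :
    (padZero l n).length = n := by
  simp [padZero]; omega

lemma padZero_getElem (l : List ℕ) (n i : ℕ) (h : i < (padZero l n).length) :
    (padZero l n)[i] = if h' : i < l.length then l[i] else 0 := by
  unfold padZero at *
  rw [List.getElem_append]
  split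
  · rfl
  · exact List.getElem_replicate _

/-- The key step: horizontal sum of a partition `B` with a strictly
decreasing partition `A`, where `B` is strictly decreasing beyond the
length of `A`. -/
lemma hSum_step (A B : List ℕ) (hA : A.Chain' (· > ·)) (hApos : ∀ x ∈ A, 0 < x)
    (hB : B.Chain' (· ≥ ·)) (hBpos : ∀ x ∈ B, 0 < x)
    (hBs : ∀ i : ℕ, A.length ≤ i → ∀ h : i + 1 < B.length,
      B[i+1]'h < B[i]'(Nat.lt_of_succ_lt h)) :
    ∃ C : List ℕ, hSum ↑B ↑A = ↑C ∧ C.Chain' (· > ·) ∧ (∀ x ∈ C, 0 < x) ∧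
      C.length = max B.length A.length := by
  have hlB : (padZero B (max B.length A.length)).length = max B.length A.length :=
    padZero_length _ _ (le_max_left _ _)
  have hlA : (padZero A (max B.length A.length)).length = max B.length A.length :=
    padZero_length _ _ (le_max_right _ _)
  have hlC : (List.zipWith (· + ·) (padZero B (max B.length A.length))
      (padZero A (max B.length A.length))).length = max B.length A.length := by
    rw [List.length_zipWith, hlB, hlA]; omega
  have hgC : ∀ i (h : i < (List.zipWith (· + ·) (padZero B (max B.length A.length))
      (padZero A (max B.length A.length))).length),
      (List.zipWith (· + ·) (padZero B (max B.length A.length))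
        (padZero A (max B.length A.length)))[i] =
      (if h' : i < B.length then B[i] else 0) + (if h' : i < A.length then A[i] else 0) := by
    intro i h
    rw [List.getElem_zipWith, padZero_getElem, padZero_getElem]
  have hAadj : ∀ i (h : i + 1 < A.length), A[i+1] < A[i]'(Nat.lt_of_succ_lt h) := by
    intro i h
    have := List.isChain_iff_getElem.mp hA i (by omega)
    simpa using this
  have hBadj : ∀ i (h : i + 1 < B.length), B[i+1] ≤ B[i]'(Nat.lt_of_succ_lt h) := by
    intro i h
    have := List.isChain_iff_getElem.mp hB i (by omega)
    simpa using this
  have hCchain : (List.zipWith (· + ·) (padZero B (max B.length A.length))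
      (padZero A (max B.length A.length))).Chain' (· > ·) := by
    rw [List.Chain', List.isChain_iff_getElem]
    intro i hi
    rw [hlC] at hi
    rw [hgC i (by rw [hlC]; omega), hgC (i+1) (by rw [hlC]; omega)]
    by_cases hia : i + 1 < A.length
    · have ha := hAadj i hia
      have hb : (if h' : i + 1 < B.length then B[i+1] else 0) ≤
          (if h' : i < B.length then B[i] else 0) := by
        by_cases h2 : i + 1 < B.length
        · rw [dif_pos h2, dif_pos (by omega)]; exact hBadj i h2
        · rw [dif_neg h2]; omega
      rw [dif_pos hia, dif_pos (by omega : i < A.length)]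
      omega
    · have h2 : i + 1 < B.length := by omega
      rw [dif_pos h2, dif_pos (by omega : i < B.length), dif_neg hia]
      by_cases h3 : i < A.length
      · have hbb := hBadj i h2
        have hposA : 0 < A[i] := hApos _ (List.getElem_mem h3)
        rw [dif_pos h3]; omega
      · have := hBs i (by omega) h2
        rw [dif_neg h3]; omega
  have hCpos : ∀ x ∈ (List.zipWith (· + ·) (padZero B (max B.length A.length))
      (padZero A (max B.length A.length))), 0 < x := by
    intro x hx
    obtain ⟨i, hi, rfl⟩ := List.mem_iff_getElem.mp hx
    rw [hgC i hi]
    rw [hlC] at hi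
    by_cases h2 : i < B.length
    · have := hBpos _ (List.getElem_mem h2); rw [dif_pos h2]; omega
    · have h3 : i < A.length := by omega
      have := hApos _ (List.getElem_mem h3); rw [dif_neg h2, dif_pos h3]; omega
  refine ⟨_, ?_, hCchain, hCpos, hlC⟩
  unfold hSum
  have hsA : A.Pairwise (· ≥ ·) := by
    have := List.isChain_iff_pairwise.mp hA
    exact this.imp (fun h => le_of_lt h)
  have hsB : B.Pairwise (· ≥ ·) := List.isChain_iff_pairwise.mp hB
  rw [sortD_coe A hsA, sortD_coe B hsB, Multiset.coe_card, Multiset.coe_card,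
    Multiset.filter_coe]
  congr 1
  apply List.filter_eq_self.mpr
  intro a ha
  simpa using hCpos a ha

lemma gauss_min (s : ℕ) : ∀ M : ℕ, ∑ i ∈ Finset.range (M + s), (s - (i - M))
    = M * s + ∑ i ∈ Finset.range s, (i + 1) := by
  intro M
  induction M with
  | zero =>
    simp only [Nat.zero_add, Nat.zero_mul, Nat.zero_add, Nat.sub_zero]
    have h1 := Finset.sum_range_reflect (fun j => s - j) s
    rw [← h1]
    apply Finset.sum_congr rfl
    intro i hi
    have := Finset.mem_range.mp hi
    omega
  | succ M ih =>
    rw [show M + 1 + s = (M + s) + 1 from by omega, Finset.sum_range_succ']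
    have e1 : ∀ i : ℕ, s - (i + 1 - (M + 1)) = s - (i - M) := fun i => by omega
    simp only [e1]
    rw [ih]
    have e2 : s - (0 - (M + 1)) = s := by omega
    rw [e2]
    ring

/-- Construction of the partition used in the inductive step. -/
lemma B_lemma (M s r : ℕ) (hs : 1 ≤ s) (hr : r ≤ M + s) :
    ∃ B : List ℕ, B.length = M + s ∧ (∀ x ∈ B, 0 < x) ∧ B.Chain' (· ≥ ·) ∧
      (∀ i : ℕ, M ≤ i → ∀ h : i + 1 < B.length,
        B[i+1]'h < B[i]'(Nat.lt_of_succ_lt h)) ∧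
      B.sum = r + (M * s + ((∑ i ∈ Finset.range s, i) + s)) := by
  refine ⟨List.ofFn (fun i : Fin (M + s) =>
    (if (i : ℕ) = 0 then r else 0) + (s - ((i : ℕ) - M))), ?_, ?_, ?_, ?_, ?_⟩
  · rw [List.length_ofFn]
  · intro x hx
    obtain ⟨i, hi, rfl⟩ := List.mem_iff_getElem.mp hx
    rw [List.getElem_ofFn]
    simp only
    rw [List.length_ofFn] at hi
    split_ifs <;> omega
  · rw [List.Chain', List.isChain_iff_getElem]
    intro i hi
    rw [List.length_ofFn] at hi
    simp only [List.get_eq_getElem, List.getElem_ofFn, Fin.val_mk]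
    split_ifs <;> first | (exfalso; assumption) | omega
  · intro i hMi h
    have h' := h
    rw [List.length_ofFn] at h'
    rw [List.getElem_ofFn, List.getElem_ofFn]
    simp only
    split_ifs <;> first | (exfalso; assumption) | omega
  · rw [List.sum_ofFn]
    rw [Fin.sum_univ_eq_sum_range (fun i => (if i = 0 then r else 0) + (s - (i - M))) (M+s)]
    rw [Finset.sum_add_distrib]
    have h1 : (∑ i ∈ Finset.range (M+s), if i = 0 then r else 0) = r := by
      rw [Finset.sum_ite_eq' (Finset.range (M+s)) 0 (fun _ => r)]
      rw [if_pos (Finset.mem_range.mpr (by omega))]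
    have h2 : (∑ i ∈ Finset.range (M+s), (s - (i - M)))
        = M * s + ((∑ i ∈ Finset.range s, i) + s) := by
      rw [gauss_min s M]
      have h4 : (∑ i ∈ Finset.range s, (i + 1)) = (∑ i ∈ Finset.range s, i) + s := by
        rw [Finset.sum_add_distrib, Finset.sum_const, Finset.card_range, smul_eq_mul, mul_one]
      rw [h4]
    rw [h1, h2]

/-- The main inductive construction, over lists of positive integers. -/
lemma key (ns : List ℕ) (hpos : ∀ x ∈ ns, 0 < x) :
    ∃ (lams : List (Multiset ℕ)) (L : List ℕ),
      List.Forall₂ (fun lm k => (∀ x ∈ lm, 0 < x) ∧ lm.sum = k) lams ns ∧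
      lams.foldr hSum 0 = ↑L ∧
      L.Chain' (· > ·) ∧ (∀ x ∈ L, 0 < x) ∧
      2 * ns.sum ≤ L.length * (L.length + 1) + 2 * ns.length * L.length := by
  induction ns with
  | nil =>
    refine ⟨[], [], List.Forall₂.nil, ?_, List.isChain_nil, by simp, by simp⟩
    simp
  | cons a rest ih =>
    have hapos : 0 < a := hpos a List.mem_cons_self
    obtain ⟨lams, L, hF, hfold, hchain, hLpos, hbound⟩ :=
      ih (fun x hx => hpos x (List.mem_cons_of_mem a hx))
    obtain ⟨s, hPs, hsle, hgreat⟩ :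
        ∃ s, (∑ i ∈ Finset.range s, (L.length + i + 1)) ≤ a ∧ s ≤ a ∧
          ∀ k, s < k → k ≤ a → ¬ ((∑ i ∈ Finset.range k, (L.length + i + 1)) ≤ a) :=
      ⟨Nat.findGreatest (fun s => (∑ i ∈ Finset.range s, (L.length + i + 1)) ≤ a) a,
        Nat.findGreatest_spec (P := fun s => (∑ i ∈ Finset.range s, (L.length + i + 1)) ≤ a)
          (Nat.zero_le a) (by simp),
        Nat.findGreatest_le a,
        fun k h1 h2 => Nat.findGreatest_is_greatest
          (P := fun s => (∑ i ∈ Finset.range s, (L.length + i + 1)) ≤ a) h1 h2⟩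
    have hqform : (∑ i ∈ Finset.range s, (L.length + i + 1))
        = L.length * s + ((∑ i ∈ Finset.range s, i) + s) := by
      rw [show (fun i => L.length + i + 1) = (fun i => i + (L.length + 1)) from
        by funext i; ring]
      rw [Finset.sum_add_distrib, Finset.sum_const, Finset.card_range, smul_eq_mul]
      ring
    have hgauss : ((∑ i ∈ Finset.range s, i) + s) * 2 = (s + 1) * s := by
      have := Finset.sum_range_id_mul_two (s + 1)
      rw [Finset.sum_range_succ] at this
      simpa using this
    obtain ⟨r, har⟩ : ∃ r, a = (L.length * s + ((∑ i ∈ Finset.range s, i) + s)) + r := by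
      refine ⟨a - (L.length * s + ((∑ i ∈ Finset.range s, i) + s)), ?_⟩
      rw [← hqform]
      omega
    have hrle : r ≤ L.length + s := by
      by_cases hcase : s + 1 ≤ a
      · have hnP := hgreat (s + 1) (by omega) hcase
        rw [Finset.sum_range_succ, hqform] at hnP
        omega
      · omega
    by_cases hs0 : s = 0
    · -- small case: B = [a]
      subst hs0
      simp only [Finset.range_zero, Finset.sum_empty, Nat.mul_zero, Nat.zero_add,
        Nat.add_zero, Nat.zero_mul] at har hrle
      have hM1 : 1 ≤ L.length := by
        have hnP := hgreat 1 (by omega) (by omega)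
        rw [Finset.sum_range_one] at hnP
        omega
      obtain ⟨C, hCeq, hCchain, hCpos, hClen⟩ := hSum_step L [a] hchain hLpos
        (List.isChain_singleton a) (by simpa using hapos)
        (by intro i hi h; simp at h)
      refine ⟨(↑[a] : Multiset ℕ) :: lams, C, ?_, ?_, hCchain, hCpos, ?_⟩
      · exact List.Forall₂.cons ⟨by simpa using hapos, by simp⟩ hF
      · rw [List.foldr_cons, hfold, hCeq]
      · have hClen' : C.length = L.length := by
          rw [hClen, List.length_singleton]
          omega
        rw [hClen']
        simp only [List.sum_cons, List.length_cons]
        nlinarith [hbound]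
    · -- main case: 1 ≤ s
      have hs1 : 1 ≤ s := by omega
      obtain ⟨B, hBlen, hBpos, hBchain, hBstr, hBsum⟩ := B_lemma L.length s r hs1 hrle
      obtain ⟨C, hCeq, hCchain, hCpos, hClen⟩ := hSum_step L B hchain hLpos
        hBchain hBpos (by intro i hi h; exact hBstr i hi h)
      refine ⟨(↑B : Multiset ℕ) :: lams, C, ?_, ?_, hCchain, hCpos, ?_⟩
      · refine List.Forall₂.cons ⟨fun x hx => hBpos x hx, ?_⟩ hF
        rw [Multiset.sum_coe, hBsum]
        omega
      · rw [List.foldr_cons, hfold, hCeq]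
      · have hClen' : C.length = L.length + s := by
          rw [hClen, hBlen]
          omega
        rw [hClen']
        simp only [List.sum_cons, List.length_cons]
        nlinarith [hbound, hgauss, har, hrle]

/-- Given positive integers `n₁ + ⋯ + n_J = n`, there exist partitions
`λ⁽ʲ⁾ ⊢ nⱼ` whose horizontal sum has at least `√(2n) − 10J` distinct row
lengths. -/
theorem exists_hSum_many_distinct_rows (J n : ℕ) (nj : Fin J → ℕ)
    (hpos : ∀ j, 0 < nj j) (hsum : ∑ j, nj j = n) :
    ∃ lam : Fin J → Multiset ℕ,
      (∀ j, ∀ x ∈ lam j, 0 < x) ∧ (∀ j, (lam j).sum = nj j) ∧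
      Real.sqrt (2 * n) - 10 * J ≤
        (((List.ofFn lam).foldr hSum 0).toFinset.card : ℝ) := by
  obtain ⟨lams, L, hF, hfold, hchain, hLpos, hbound⟩ := key (List.ofFn nj)
    (by
      intro x hx
      rw [List.mem_ofFn] at hx
      obtain ⟨j, rfl⟩ := hx
      exact hpos j)
  have hlen : lams.length = J := by
    have := hF.length_eq
    simpa using this
  refine ⟨fun j => lams[(j : ℕ)]'(by omega), ?_, ?_, ?_⟩
  · intro j
    obtain ⟨-, hget⟩ := List.forall₂_iff_get.mp hF
    exact (hget j (by omega) (by simp)).1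
  · intro j
    obtain ⟨-, hget⟩ := List.forall₂_iff_get.mp hF
    have := (hget j (by omega) (by simp)).2
    simpa using this
  · have hofn : List.ofFn (fun j : Fin J => lams[(j : ℕ)]'(by omega)) = lams := by
      apply List.ext_getElem (by simp [hlen])
      intro i h1 h2
      simp
    rw [hofn, hfold]
    have hnodup : (↑L : Multiset ℕ).Nodup := by
      have := List.isChain_iff_pairwise.mp hchain
      exact this.imp (fun h => ne_of_gt h)
    rw [Multiset.toFinset_card_of_nodup hnodup, Multiset.coe_card]
    have hnsum : (List.ofFn nj).sum = n := by rw [List.sum_ofFn, hsum]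
    have hnlen : (List.ofFn nj).length = J := by simp
    rw [hnsum, hnlen] at hbound
    rcases Nat.eq_zero_or_pos J with hJ | hJ
    · subst hJ
      have hn0 : n = 0 := by rw [← hsum]; simp
      subst hn0
      simp
    · have h2 : 2 * n ≤ (L.length + J + 1) ^ 2 := by nlinarith [hbound]
      have hle : ((2 * n : ℕ) : ℝ) ≤ (((L.length + J + 1) ^ 2 : ℕ) : ℝ) := Nat.cast_le.mpr h2
      push_cast at hle
      have hsq : Real.sqrt (2 * n) ≤ (L.length : ℝ) + J + 1 := by
        calc Real.sqrt (2 * n) ≤ Real.sqrt (((L.length : ℝ) + J + 1) ^ 2) :=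
              Real.sqrt_le_sqrt (by nlinarith [hle])
          _ = (L.length : ℝ) + J + 1 := by
              rw [Real.sqrt_sq (by positivity)]
      have hJ1 : (1 : ℝ) ≤ (J : ℝ) := by exact_mod_cast hJ
      linarith
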